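/- arXiv:math/9607211 — 2 statements merged into one kernel-verified Lean document; each statement's English description precedes it below -/
import Mathlib

section
/- Let X and Y be locally compact Hausdorff spaces, let E and F be real Banach spaces with F strictly convex, and let T : C₀(X,E) → C₀(Y,F) be a linear isometry. Let x ∈ X, e ∈ E, and let f ∈ C₀(X,E) satisfy f(x) = e and ‖f‖ = ‖e‖. Then sup{‖Tf(y)‖ : y ∈ Q_x} = ‖e‖. -/
/-! For `e ≠ 0` choose `ν` with `‖ν‖ = 1` and `ν e = ‖e‖`, so that `‖e‖⁻¹ • f ∈ S_{x,ν}`. The image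
`T(S_{x,ν})` is a convex set of norm-one functions vanishing at infinity. The compact sets
`{y | 1 ≤ ‖g y‖}`, `g ∈ T(S_{x,ν})`, have the finite intersection property, because an average of
finitely many such `g` attains its norm only at points where every one of them has norm one; hence
all of `T(S_{x,ν})` has norm one at a common point `y`. By strict convexity of `F` all values at `y`
then coincide, and a functional norming this common value puts `y` in `Q_{x,ν}`, where
`‖Tf(y)‖ = ‖e‖`. -/

open ZeroAtInfty

variable {X Y E F : Type*}
  [TopologicalSpace X] [LocallyCompactSpace X] [T2Space X]
  [TopologicalSpace Y] [LocallyCompactSpace Y] [T2Space Y]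
  [NormedAddCommGroup E] [NormedSpace ℝ E] [CompleteSpace E]
  [NormedAddCommGroup F] [NormedSpace ℝ F] [CompleteSpace F]

/-- `S_{x,ν} = {f ∈ C₀(X,E) : ν(f(x)) = ‖f‖ = 1}`. -/
def Sset (x : X) (ν : E →L[ℝ] ℝ) : Set C₀(X, E) :=
  {f | ν (f x) = 1 ∧ ‖f‖ = 1}

/-- `R_{y,μ} = {g ∈ C₀(Y,F) : μ(g(y)) = ‖g‖ = 1}`. -/
def Rset (y : Y) (μ : F →L[ℝ] ℝ) : Set C₀(Y, F) :=
  {g | μ (g y) = 1 ∧ ‖g‖ = 1}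

/-- `Q_{x,ν}`: the set of `y ∈ Y` such that `T(S_{x,ν}) ⊆ R_{y,μ}` for some `μ` in the unit
sphere of `F*`, when `S_{x,ν} ≠ ∅`; empty otherwise. -/
def Qnu (T : C₀(X, E) →ₗᵢ[ℝ] C₀(Y, F)) (x : X) (ν : E →L[ℝ] ℝ) : Set Y :=
  {y | (Sset x ν).Nonempty ∧
    ∃ μ : F →L[ℝ] ℝ, ‖μ‖ = 1 ∧ ∀ f ∈ Sset x ν, T f ∈ Rset y μ}

/-- `Q_x = ⋃_{ν ∈ S_{E*}} Q_{x,ν}`. -/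
def Qset (T : C₀(X, E) →ₗᵢ[ℝ] C₀(Y, F)) (x : X) : Set Y :=
  ⋃ ν ∈ {ν : E →L[ℝ] ℝ | ‖ν‖ = 1}, Qnu T x ν

open Filter Set

lemma forall_norm_eq_one_of_one_le_norm_sum_smul {ι V : Type*} [SeminormedAddCommGroup V]
    [NormedSpace ℝ V] {t : Finset ι} {w : ι → ℝ} {v : ι → V} (hw : ∀ i ∈ t, 0 < w i)
    (hw1 : ∑ i ∈ t, w i = 1) (hv : ∀ i ∈ t, ‖v i‖ ≤ 1) (h : 1 ≤ ‖∑ i ∈ t, w i • v i‖) :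
    ∀ i ∈ t, ‖v i‖ = 1 := by
  have hle : ∀ i ∈ t, w i * ‖v i‖ ≤ w i := fun i hi =>
    mul_le_of_le_one_right (hw i hi).le (hv i hi)
  have hsum : ∑ i ∈ t, w i * ‖v i‖ = ∑ i ∈ t, w i := by
    refine le_antisymm (Finset.sum_le_sum hle) ?_
    calc ∑ i ∈ t, w i = 1 := hw1
      _ ≤ ‖∑ i ∈ t, w i • v i‖ := h
      _ ≤ ∑ i ∈ t, ‖w i • v i‖ := norm_sum_le _ _
      _ = ∑ i ∈ t, w i * ‖v i‖ := Finset.sum_congr rfl fun i hi => by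
        rw [norm_smul, Real.norm_of_nonneg (hw i hi).le]
  intro i hi
  exact (mul_eq_left₀ (hw i hi).ne').1 ((Finset.sum_eq_sum_iff_of_le hle).1 hsum i hi)

namespace ZeroAtInftyContinuousMap

variable {α β : Type*} [TopologicalSpace α]

section Seminormed

variable [SeminormedAddCommGroup β]

lemma norm_le (g : C₀(α, β)) {C : ℝ} (hC : 0 ≤ C) : ‖g‖ ≤ C ↔ ∀ a, ‖g a‖ ≤ C :=
  norm_toBCF_eq_norm (f := g) ▸ g.toBCF.norm_le hC

lemma norm_apply_le (g : C₀(α, β)) (a : α) : ‖g a‖ ≤ ‖g‖ :=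
  (g.norm_le (norm_nonneg g)).1 le_rfl a

lemma sum_apply {ι : Type*} (t : Finset ι) (g : ι → C₀(α, β)) (a : α) :
    (∑ i ∈ t, g i) a = ∑ i ∈ t, g i a :=
  map_sum (⟨⟨fun g : C₀(α, β) => g a, rfl⟩, fun _ _ => rfl⟩ : C₀(α, β) →+ β) g t

lemma eventually_norm_apply_lt (g : C₀(α, β)) {r : ℝ} (hr : 0 < r) :
    ∀ᶠ a in cocompact α, ‖g a‖ < r :=
  (tendsto_zero_iff_norm_tendsto_zero.1 (zero_at_infty g)).eventually_lt_const hr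

lemma isCompact_setOf_le_norm_apply (g : C₀(α, β)) {r : ℝ} (hr : 0 < r) :
    IsCompact {a | r ≤ ‖g a‖} := by
  obtain ⟨K, hK, hKsub⟩ := mem_cocompact.1 (g.eventually_norm_apply_lt hr)
  refine hK.of_isClosed_subset (isClosed_le continuous_const (map_continuous g).norm) ?_
  rintro a (ha : r ≤ ‖g a‖)
  by_contra haK
  exact (hKsub haK).not_ge ha

lemma exists_norm_apply_eq_norm {g : C₀(α, β)} (hg : 0 < ‖g‖) : ∃ a, ‖g a‖ = ‖g‖ := by
  obtain ⟨a₀, ha₀⟩ : ∃ a₀, 0 < ‖g a₀‖ := by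
    by_contra! h
    exact hg.not_ge ((g.norm_le le_rfl).2 h)
  obtain ⟨a, ha⟩ := (map_continuous g).norm.exists_forall_ge' a₀
    ((g.eventually_norm_apply_lt ha₀).mono fun _ h => h.le)
  exact ⟨a, le_antisymm (g.norm_apply_le a) ((g.norm_le (norm_nonneg _)).2 ha)⟩

variable [NormedSpace ℝ β] {C : Set C₀(α, β)}

lemma exists_forall_norm_apply_eq_one_of_finset (hC : Convex ℝ C) (hC1 : ∀ g ∈ C, ‖g‖ = 1)
    {t : Finset C₀(α, β)} (ht : t.Nonempty) (htC : ↑t ⊆ C) : ∃ a, ∀ g ∈ t, ‖g a‖ = 1 := by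
  have hw : (0 : ℝ) < (t.card : ℝ)⁻¹ := inv_pos.2 (by exact_mod_cast ht.card_pos)
  have hw1 : ∑ _g ∈ t, (t.card : ℝ)⁻¹ = 1 := by
    rw [Finset.sum_const, nsmul_eq_mul, mul_inv_cancel₀ (inv_pos.1 hw).ne']
  have hmem : ∑ g ∈ t, (t.card : ℝ)⁻¹ • g ∈ C :=
    hC.sum_mem (fun _ _ => hw.le) hw1 htC
  obtain ⟨a, ha⟩ := exists_norm_apply_eq_norm (by rw [hC1 _ hmem]; exact one_pos)
  refine ⟨a, forall_norm_eq_one_of_one_le_norm_sum_smul (fun _ _ => hw) hw1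
    (fun g hg => hC1 g (htC hg) ▸ g.norm_apply_le a) ?_⟩
  rw [hC1 _ hmem, sum_apply] at ha
  exact ha.ge

lemma exists_forall_norm_apply_eq_one_of_convex (hC : Convex ℝ C) (hCne : C.Nonempty)
    (hC1 : ∀ g ∈ C, ‖g‖ = 1) : ∃ a, ∀ g ∈ C, ‖g a‖ = 1 := by
  classical
  obtain ⟨g₀, hg₀⟩ := hCne
  obtain ⟨a, -, ha⟩ := (g₀.isCompact_setOf_le_norm_apply one_pos).inter_iInter_nonempty
    (fun g : C => {a | 1 ≤ ‖(g : C₀(α, β)) a‖})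
    (fun g => isClosed_le continuous_const (map_continuous (g : C₀(α, β))).norm) fun u => by
      obtain ⟨a, ha⟩ := exists_forall_norm_apply_eq_one_of_finset hC hC1
        (t := insert g₀ (u.image (↑))) (Finset.insert_nonempty _ _)
        (by simpa [Set.insert_subset_iff] using hg₀)
      exact ⟨a, (ha g₀ (Finset.mem_insert_self _ _)).ge, mem_iInter₂.2 fun g hg =>
        (ha g (Finset.mem_insert_of_mem (Finset.mem_image_of_mem _ hg))).ge⟩
  exact ⟨a, fun g hg => le_antisymm (hC1 g hg ▸ g.norm_apply_le a) (mem_iInter.1 ha ⟨g, hg⟩)⟩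

end Seminormed

lemma exists_forall_apply_eq_of_convex [NormedAddCommGroup β] [NormedSpace ℝ β]
    [StrictConvexSpace ℝ β] {C : Set C₀(α, β)} (hC : Convex ℝ C) (hCne : C.Nonempty)
    (hC1 : ∀ g ∈ C, ‖g‖ = 1) : ∃ a, ∃ u : β, ‖u‖ = 1 ∧ ∀ g ∈ C, g a = u := by
  obtain ⟨a, ha⟩ := exists_forall_norm_apply_eq_one_of_convex hC hCne hC1
  obtain ⟨g₀, hg₀⟩ := hCne
  refine ⟨a, g₀ a, ha g₀ hg₀, fun g hg => ?_⟩
  by_contra hne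
  have hmid := ha _ (hC hg hg₀ (by norm_num : (0 : ℝ) ≤ 1 / 2) (by norm_num : (0 : ℝ) ≤ 1 / 2)
    (by norm_num))
  have hlt := combo_mem_ball_of_ne (mem_closedBall_zero_iff.2 (ha g hg).le)
    (mem_closedBall_zero_iff.2 (ha g₀ hg₀).le) hne (by norm_num : (0 : ℝ) < 1 / 2)
    (by norm_num : (0 : ℝ) < 1 / 2) (by norm_num)
  rw [mem_ball_zero_iff] at hlt
  rw [add_apply, smul_apply, smul_apply] at hmid
  exact hlt.ne hmid

end ZeroAtInftyContinuousMap

section Qnu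

variable {α β V W : Type*} [TopologicalSpace α] [TopologicalSpace β]
  [NormedAddCommGroup V] [NormedSpace ℝ V] [NormedAddCommGroup W] [NormedSpace ℝ W]

lemma mem_Sset_iff {x : α} {ν : V →L[ℝ] ℝ} (hν : ‖ν‖ ≤ 1) {f : C₀(α, V)} :
    f ∈ Sset x ν ↔ ν (f x) = 1 ∧ ‖f‖ ≤ 1 := by
  refine ⟨fun hf => ⟨hf.1, hf.2.le⟩, fun hf => ⟨hf.1, le_antisymm hf.2 ?_⟩⟩
  calc 1 = ν (f x) := hf.1.symm
    _ ≤ ‖ν‖ * ‖f x‖ := (le_abs_self _).trans (ν.le_opNorm _)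
    _ ≤ 1 * ‖f‖ := mul_le_mul hν (f.norm_apply_le x) (norm_nonneg _) zero_le_one
    _ = ‖f‖ := one_mul _

lemma convex_Sset {x : α} {ν : V →L[ℝ] ℝ} (hν : ‖ν‖ ≤ 1) : Convex ℝ (Sset x ν) := by
  have hS : Sset x ν = {f : C₀(α, V) | ν (f x) = 1} ∩ Metric.closedBall 0 1 := by
    ext f
    rw [mem_Sset_iff hν, mem_inter_iff, mem_closedBall_zero_iff]
    rfl
  rw [hS]
  exact (convex_hyperplane ⟨fun f g => by simp, fun c f => by simp⟩ 1).inter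
    (convex_closedBall 0 1)

lemma Qnu_nonempty [StrictConvexSpace ℝ W] (T : C₀(α, V) →ₗᵢ[ℝ] C₀(β, W)) {x : α}
    {ν : V →L[ℝ] ℝ} (hν : ‖ν‖ ≤ 1) (hS : (Sset x ν).Nonempty) : (Qnu T x ν).Nonempty := by
  have hTS : ∀ g ∈ T '' Sset x ν, ‖g‖ = 1 := by
    rintro _ ⟨f, hf, rfl⟩
    rw [T.norm_map, hf.2]
  obtain ⟨y, u, hu, hTu⟩ := ZeroAtInftyContinuousMap.exists_forall_apply_eq_of_convex
    ((convex_Sset hν).linear_image T.toLinearMap) (hS.image T) hTS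
  obtain ⟨μ, hμ, hμu⟩ := exists_dual_vector ℝ u (by rw [hu]; exact one_ne_zero)
  refine ⟨y, hS, μ, hμ, fun f hf => ⟨?_, hTS _ (mem_image_of_mem T hf)⟩⟩
  rw [hTu _ (mem_image_of_mem T hf), hμu, hu]
  rfl

lemma norm_apply_eq_one_of_mem_Qnu {T : C₀(α, V) →ₗᵢ[ℝ] C₀(β, W)} {x : α} {ν : V →L[ℝ] ℝ}
    {y : β} (hy : y ∈ Qnu T x ν) {f : C₀(α, V)} (hf : f ∈ Sset x ν) : ‖T f y‖ = 1 := by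
  obtain ⟨-, μ, hμ, hR⟩ := hy
  obtain ⟨hμf, hTf⟩ := hR f hf
  refine le_antisymm (hTf ▸ (T f).norm_apply_le y) ?_
  calc 1 = μ (T f y) := hμf.symm
    _ ≤ ‖μ‖ * ‖T f y‖ := (le_abs_self _).trans (μ.le_opNorm _)
    _ = ‖T f y‖ := by rw [hμ, one_mul]

end Qnu

/-- If `f(x) = e` and `‖f‖ = ‖e‖`, then `sup{‖Tf(y)‖ : y ∈ Q_x} = ‖e‖`. -/
theorem sSup_norm_apply_eq [StrictConvexSpace ℝ F]
    (T : C₀(X, E) →ₗᵢ[ℝ] C₀(Y, F)) (x : X) (e : E) (f : C₀(X, E))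
    (hfx : f x = e) (hf : ‖f‖ = ‖e‖) :
    sSup {r : ℝ | ∃ y ∈ Qset T x, r = ‖T f y‖} = ‖e‖ := by
  have hle : ∀ r ∈ {r : ℝ | ∃ y ∈ Qset T x, r = ‖T f y‖}, r ≤ ‖e‖ := by
    rintro _ ⟨y, -, rfl⟩
    exact hf ▸ T.norm_map f ▸ (T f).norm_apply_le y
  rcases eq_or_ne e 0 with rfl | he
  · rw [norm_zero] at hle ⊢
    exact le_antisymm (Real.sSup_nonpos hle)
      (Real.sSup_nonneg fun _ ⟨_, _, hr⟩ => hr ▸ norm_nonneg _)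
  have he' : ‖e‖ ≠ 0 := norm_ne_zero_iff.2 he
  obtain ⟨ν, hν, hνe⟩ := exists_dual_vector ℝ e he'
  have hS : ‖e‖⁻¹ • f ∈ Sset x ν := by
    refine ⟨?_, ?_⟩
    · rw [ZeroAtInftyContinuousMap.smul_apply, map_smul, hfx, hνe, smul_eq_mul]
      exact inv_mul_cancel₀ he'
    · rw [norm_smul, norm_inv, norm_norm, hf, inv_mul_cancel₀ he']
  obtain ⟨y, hy⟩ := Qnu_nonempty T hν.le ⟨_, hS⟩
  refine IsGreatest.csSup_eq ⟨⟨y, mem_biUnion hν hy, ?_⟩, hle⟩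
  have hy1 := norm_apply_eq_one_of_mem_Qnu hy hS
  rwa [map_smul, ZeroAtInftyContinuousMap.smul_apply, norm_smul, norm_inv, norm_norm,
    inv_mul_eq_one₀ he'] at hy1
end

section
/- Let X and Y be locally compact Hausdorff spaces, let E and F be real Banach spaces, and let T : C₀(X,E) → C₀(Y,F) be a linear isometry. Let Y₁ be a subset of Y (with the subspace topology), φ : Y₁ → X a continuous map, and h : Y₁ → B(E,F) a map such that Tf(y) = h(y)(f(φ(y))) for every f ∈ C₀(X,E) and every y ∈ Y₁. Then h is continuous with respect to the strong operator topology on B(E,F); that is, for every e ∈ E the map y ↦ h(y)e from Y₁ to F is norm-continuous. -/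
open ZeroAtInfty Filter Topology

/-
Every vector `v ∈ E` is the value at a prescribed point of a `C₀` function of norm at most `‖v‖`
(an Urysohn bump times `v`). Applied to the weighted composition `Tf(y) = h(y)(f(φ(y)))`, this
shows first that `‖h(y)‖ ≤ 1`, since `T` is an isometry. Then, given `e` and `y₀`, pick such an `f`
with `f(φ(y₀)) = e` and split `h(y)e = h(y)(e - f(φ(y))) + Tf(y)`: the first term is bounded by
`‖e - f(φ(y))‖ → 0` as `y → y₀`, and the second is continuous in `y`.
-/

namespace ZeroAtInftyContinuousMap

theorem norm_apply_le_s12 {α β : Type*} [TopologicalSpace α] [SeminormedAddCommGroup β]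
    (f : C₀(α, β)) (x : α) : ‖f x‖ ≤ ‖f‖ :=
  norm_toBCF_eq_norm (f := f) ▸ f.toBCF.norm_coe_le_norm x

theorem exists_apply_eq_norm_le {X E : Type*} [TopologicalSpace X] [RegularSpace X]
    [LocallyCompactSpace X] [NormedAddCommGroup E] [NormedSpace ℝ E] (x₀ : X) (v : E) :
    ∃ f : C₀(X, E), f x₀ = v ∧ ‖f‖ ≤ ‖v‖ := by
  obtain ⟨g, hg_one, -, hg_supp, hg_mem⟩ := exists_continuous_one_zero_of_isCompact
    (isCompact_singleton (x := x₀)) isClosed_empty (Set.disjoint_empty _)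
  have hsupp : HasCompactSupport fun x => g x • v := hg_supp.smul_right
  refine ⟨⟨⟨fun x => g x • v, by fun_prop⟩, hsupp.is_zero_at_infty⟩, ?_, ?_⟩
  · simp [hg_one (Set.mem_singleton x₀)]
  · rw [← norm_toBCF_eq_norm]
    refine (BoundedContinuousFunction.norm_le (norm_nonneg v)).mpr fun x => ?_
    have hg_abs : ‖g x‖ ≤ 1 := by
      rw [Real.norm_eq_abs, abs_le]
      exact ⟨by linarith [(hg_mem x).1], (hg_mem x).2⟩
    calc ‖g x • v‖ = ‖g x‖ * ‖v‖ := norm_smul _ _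
      _ ≤ ‖v‖ := mul_le_of_le_one_left (norm_nonneg v) hg_abs

end ZeroAtInftyContinuousMap

section WeightedComposition

variable {X Z E F : Type*} [TopologicalSpace X] [RegularSpace X] [LocallyCompactSpace X]
  [NormedAddCommGroup E] [NormedSpace ℝ E]
  [NormedAddCommGroup F] [NormedSpace ℝ F]

theorem opNorm_le_one_of_weightedComposition {Y : Type*} [TopologicalSpace Y]
    (T : C₀(X, E) → C₀(Y, F)) (hT_le : ∀ f, ‖T f‖ ≤ ‖f‖) (ι : Z → Y) (φ : Z → X)
    (h : Z → E →L[ℝ] F) (hT : ∀ f z, T f (ι z) = h z (f (φ z))) (z : Z) : ‖h z‖ ≤ 1 := by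
  refine ContinuousLinearMap.opNorm_le_bound _ zero_le_one fun v => ?_
  obtain ⟨f, hf_eq, hf_le⟩ := ZeroAtInftyContinuousMap.exists_apply_eq_norm_le (φ z) v
  calc ‖h z v‖ = ‖T f (ι z)‖ := by rw [hT, hf_eq]
    _ ≤ ‖f‖ := ((T f).norm_apply_le_s12 _).trans (hT_le f)
    _ ≤ 1 * ‖v‖ := by rwa [one_mul]

theorem continuous_apply_of_weightedComposition [TopologicalSpace Z] {φ : Z → X} (hφ : Continuous φ)
    {h : Z → E →L[ℝ] F} {C : ℝ} (h_le : ∀ z, ‖h z‖ ≤ C)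
    (h_cont : ∀ f : C₀(X, E), Continuous fun z => h z (f (φ z))) (e : E) :
    Continuous fun z => h z e := by
  refine continuous_iff_continuousAt.mpr fun z₀ => ?_
  obtain ⟨f, hf_eq, -⟩ := ZeroAtInftyContinuousMap.exists_apply_eq_norm_le (φ z₀) e
  have h_err : Tendsto (fun z => h z (e - f (φ z))) (𝓝 z₀) (𝓝 0) := by
    have h_dist : Tendsto (fun z => C * ‖e - f (φ z)‖) (𝓝 z₀) (𝓝 0) := by
      have hc : Continuous fun z => C * ‖e - f (φ z)‖ := by fun_prop
      simpa [hf_eq] using hc.tendsto z₀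
    refine squeeze_zero_norm (fun z => ?_) h_dist
    exact (h z).le_of_opNorm_le (h_le z) _
  have h_main : Tendsto (fun z => h z (f (φ z))) (𝓝 z₀) (𝓝 (h z₀ e)) := by
    simpa [hf_eq] using (h_cont f).tendsto z₀
  simpa [ContinuousAt] using h_err.add h_main

end WeightedComposition

theorem h_continuous_sot_general
    {X Y E F : Type*}
    [TopologicalSpace X] [LocallyCompactSpace X] [T2Space X]
    [TopologicalSpace Y]
    [NormedAddCommGroup E] [NormedSpace ℝ E]
    [NormedAddCommGroup F] [NormedSpace ℝ F]
    (T : C₀(X, E) →ₗᵢ[ℝ] C₀(Y, F)) (Y₁ : Set Y)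
    (φ : Y₁ → X) (hφ : Continuous φ) (h : Y₁ → (E →L[ℝ] F))
    (hT : ∀ (f : C₀(X, E)) (y : Y₁), T f y.1 = h y (f (φ y))) :
    ∀ e : E, Continuous fun y : Y₁ => h y e := by
  have h_le : ∀ y, ‖h y‖ ≤ 1 :=
    opNorm_le_one_of_weightedComposition T (fun f => (T.norm_map f).le) Subtype.val φ h hT
  have h_cont (f : C₀(X, E)) : Continuous fun y : Y₁ => h y (f (φ y)) := by
    simp_rw [← hT]
    fun_prop
  exact continuous_apply_of_weightedComposition hφ h_le h_cont

/-- Claim 6: if `Tf(y) = h(y)(f(φ(y)))` on `Y₁` with `φ` continuous, then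
`h : Y₁ → B(E,F)` is continuous for the strong operator topology, i.e. `y ↦ h(y)e` is
norm-continuous for every `e ∈ E`. -/
theorem h_continuous_sot
    {X Y E F : Type*}
    [TopologicalSpace X] [LocallyCompactSpace X] [T2Space X]
    [TopologicalSpace Y] [LocallyCompactSpace Y] [T2Space Y]
    [NormedAddCommGroup E] [NormedSpace ℝ E] [CompleteSpace E]
    [NormedAddCommGroup F] [NormedSpace ℝ F] [CompleteSpace F]
    (T : C₀(X, E) →ₗᵢ[ℝ] C₀(Y, F)) (Y₁ : Set Y)
    (φ : Y₁ → X) (hφ : Continuous φ) (h : Y₁ → (E →L[ℝ] F))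
    (hT : ∀ (f : C₀(X, E)) (y : Y₁), T f y.1 = h y (f (φ y))) :
    ∀ e : E, Continuous fun y : Y₁ => h y e :=
  h_continuous_sot_general T Y₁ φ hφ h hT
end
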